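/- For any function u in H^1_0 of a domain in R^2, the L^4 norm of u is bounded by 2^{1/4} times the square root of the L^2 norm of u times the square root of the L^2 norm of the gradient of u. -/

import Mathlib

/-!
Put `w = ‖u‖²`. Integrating `∂₁w` along horizontal lines and `∂₂w` along vertical lines bounds
`|w(a, b)|` both by `∫ |∂₁w(t, b)| dt` and by `∫ |∂₂w(a, t)| dt`; multiplying the two bounds and
integrating over the plane gives `∫ w² ≤ ‖∂₁w‖₁ ‖∂₂w‖₁`. Since `|∂₁w|² + |∂₂w|² = |∇w|²`, the
Cauchy–Schwarz inequality `|∂₁w(x)| |∂₂w(y)| + |∂₂w(x)| |∂₁w(y)| ≤ |∇w(x)| |∇w(y)|`, integrated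
over `(x, y)`, improves this to `2 ∫ w² ≤ ‖∇w‖₁²`. Finally `|∇w| ≤ 2 |u| |Du|`, so by Hölder
`‖∇w‖₁ ≤ 2 ‖u‖₂ ‖Du‖₂`, and `∫ |u|⁴ = ∫ w² ≤ 2 ‖u‖₂² ‖Du‖₂²`.
-/

open MeasureTheory Set
open scoped ENNReal

theorem ENNReal.mul_add_mul_le_of_sq_add_sq_le {a b c d x y : ℝ≥0∞}
    (hx : a ^ 2 + b ^ 2 ≤ x ^ 2) (hy : c ^ 2 + d ^ 2 ≤ y ^ 2) : a * c + b * d ≤ x * y := by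
  have hCS := ENNReal.inner_le_Lp_mul_Lq Finset.univ ![a, b] ![c, d] Real.HolderConjugate.two_two
  have hsqrt (s : ℝ≥0∞) : (s ^ 2) ^ (1 / 2 : ℝ) = s := by
    rw [← ENNReal.rpow_natCast, ← ENNReal.rpow_mul]; norm_num
  simp only [Fin.sum_univ_two, Matrix.cons_val_zero, Matrix.cons_val_one, ENNReal.rpow_two] at hCS
  calc a * c + b * d ≤ (a ^ 2 + b ^ 2) ^ (1 / 2 : ℝ) * (c ^ 2 + d ^ 2) ^ (1 / 2 : ℝ) := hCS
    _ ≤ (x ^ 2) ^ (1 / 2 : ℝ) * (y ^ 2) ^ (1 / 2 : ℝ) := by gcongr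
    _ = x * y := by rw [hsqrt, hsqrt]

theorem eLpNorm_nat_pow_eq_lintegral {α ε : Type*} [MeasurableSpace α] [ENorm ε]
    {μ : Measure α} {f : α → ε} {n : ℕ} (hn : n ≠ 0) :
    eLpNorm f n μ ^ n = ∫⁻ x, ‖f x‖ₑ ^ n ∂μ := by
  simpa [ENNReal.rpow_natCast] using
    eLpNorm_nnreal_pow_eq_lintegral (μ := μ) (f := f) (p := n) (by exact_mod_cast hn)

theorem two_mul_lintegral_mul_le_sq_lintegral {α : Type*} [MeasurableSpace α] {μ : Measure α}
    [SFinite μ] {f g h : α → ℝ≥0∞} (hf : AEMeasurable f μ) (hg : AEMeasurable g μ)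
    (hh : AEMeasurable h μ) (hfgh : ∀ x, f x ^ 2 + g x ^ 2 ≤ h x ^ 2) :
    2 * ((∫⁻ x, f x ∂μ) * ∫⁻ x, g x ∂μ) ≤ (∫⁻ x, h x ∂μ) ^ 2 := by
  have hfg : AEMeasurable (fun z : α × α ↦ f z.1 * g z.2) (μ.prod μ) :=
    hf.comp_fst.mul hg.comp_snd
  calc 2 * ((∫⁻ x, f x ∂μ) * ∫⁻ x, g x ∂μ)
      = ∫⁻ z, f z.1 * g z.2 + g z.1 * f z.2 ∂μ.prod μ := by
        rw [lintegral_add_left' hfg, lintegral_prod_mul hf hg, lintegral_prod_mul hg hf]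
        ring
    _ ≤ ∫⁻ z, h z.1 * h z.2 ∂μ.prod μ :=
        lintegral_mono fun z ↦ ENNReal.mul_add_mul_le_of_sq_add_sq_le (hfgh z.1)
          ((add_comm _ _).trans_le (hfgh z.2))
    _ = (∫⁻ x, h x ∂μ) ^ 2 := by rw [lintegral_prod_mul hh hh, sq]

theorem lintegral_mul_le_of_le_lintegral_slices {α β : Type*} [MeasurableSpace α]
    [MeasurableSpace β] {μ : Measure α} {ν : Measure β} [SFinite μ] [SFinite ν]
    {F G f g : α × β → ℝ≥0∞} (hf : Measurable f) (hg : Measurable g)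
    (hF : ∀ p, F p ≤ ∫⁻ t, f (t, p.2) ∂μ) (hG : ∀ p, G p ≤ ∫⁻ t, g (p.1, t) ∂ν) :
    ∫⁻ p, F p * G p ∂μ.prod ν ≤ (∫⁻ p, f p ∂μ.prod ν) * ∫⁻ p, g p ∂μ.prod ν := by
  calc ∫⁻ p, F p * G p ∂μ.prod ν
      ≤ ∫⁻ p, (∫⁻ t, g (p.1, t) ∂ν) * ∫⁻ t, f (t, p.2) ∂μ ∂μ.prod ν :=
        lintegral_mono fun p ↦ by rw [mul_comm]; exact mul_le_mul' (hG p) (hF p)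
    _ = (∫⁻ a, ∫⁻ t, g (a, t) ∂ν ∂μ) * ∫⁻ b, ∫⁻ t, f (t, b) ∂μ ∂ν :=
        lintegral_prod_mul hg.lintegral_prod_right'.aemeasurable
          hf.lintegral_prod_left'.aemeasurable
    _ = (∫⁻ p, f p ∂μ.prod ν) * ∫⁻ p, g p ∂μ.prod ν := by
        rw [lintegral_prod _ hg.aemeasurable, lintegral_prod_symm _ hf.aemeasurable, mul_comm]

section CompactSupport

variable {E F : Type*} [NormedAddCommGroup E] [NormedSpace ℝ E] [NormedAddCommGroup F]
  [NormedSpace ℝ F]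

theorem HasCompactSupport.enorm_le_lintegral_fderiv_line {v : E → F} (hv : ContDiff ℝ 1 v)
    (hsupp : HasCompactSupport v) (x : E) {e : E} (he : e ≠ 0) :
    ‖v x‖ₑ ≤ ∫⁻ t : ℝ, ‖fderiv ℝ v (x + t • e) e‖ₑ := by
  have hline (t : ℝ) : HasDerivAt (fun t : ℝ ↦ x + t • e) e t := by
    simpa using ((hasDerivAt_id t).smul_const e).const_add x
  have hderiv (t : ℝ) : deriv (fun t ↦ v (x + t • e)) t = fderiv ℝ v (x + t • e) e :=
    ((hv.differentiable one_ne_zero _).hasFDerivAt.comp_hasDerivAt t (hline t)).deriv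
  have hemb : Topology.IsClosedEmbedding (fun t : ℝ ↦ x + t • e) :=
    (Homeomorph.addLeft x).isClosedEmbedding.comp (isClosedEmbedding_smul_left he)
  calc ‖v x‖ₑ = ‖v (x + (0 : ℝ) • e)‖ₑ := by simp
    _ ≤ ∫⁻ t in Iic 0, ‖deriv (fun t ↦ v (x + t • e)) t‖ₑ :=
        HasCompactSupport.enorm_le_lintegral_Ici_deriv
          (hv.comp (contDiff_const.add (contDiff_id.smul contDiff_const)))
          (hsupp.comp_isClosedEmbedding hemb) 0
    _ ≤ ∫⁻ t, ‖fderiv ℝ v (x + t • e) e‖ₑ := by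
        simp only [hderiv]; exact setLIntegral_le_lintegral _ _

theorem lintegral_enorm_sq_le_lintegral_fderiv_mul {v : ℝ × ℝ → F} (hv : ContDiff ℝ 1 v)
    (hsupp : HasCompactSupport v) :
    ∫⁻ p, ‖v p‖ₑ ^ 2 ≤
      (∫⁻ p, ‖fderiv ℝ v p (1, 0)‖ₑ) * ∫⁻ p, ‖fderiv ℝ v p (0, 1)‖ₑ := by
  have hDv : Continuous (fderiv ℝ v) := hv.continuous_fderiv one_ne_zero
  rw [Measure.volume_eq_prod]
  simp_rw [sq]
  refine lintegral_mul_le_of_le_lintegral_slices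
    (hDv.clm_apply continuous_const).enorm.measurable
    (hDv.clm_apply continuous_const).enorm.measurable (fun ⟨a, b⟩ ↦ ?_) (fun ⟨a, b⟩ ↦ ?_)
  · calc ‖v (a, b)‖ₑ ≤ ∫⁻ t : ℝ, ‖fderiv ℝ v ((a, b) + t • (1, 0)) (1, 0)‖ₑ :=
          hsupp.enorm_le_lintegral_fderiv_line hv _ (by simp)
      _ = ∫⁻ t, ‖fderiv ℝ v (t, b) (1, 0)‖ₑ := by
          simpa using lintegral_add_left_eq_self (μ := volume)
            (fun t ↦ ‖fderiv ℝ v (t, b) (1, 0)‖ₑ) a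
  · calc ‖v (a, b)‖ₑ ≤ ∫⁻ t : ℝ, ‖fderiv ℝ v ((a, b) + t • (0, 1)) (0, 1)‖ₑ :=
          hsupp.enorm_le_lintegral_fderiv_line hv _ (by simp)
      _ = ∫⁻ t, ‖fderiv ℝ v (a, t) (0, 1)‖ₑ := by
          simpa using lintegral_add_left_eq_self (μ := volume)
            (fun t ↦ ‖fderiv ℝ v (a, t) (0, 1)‖ₑ) b

end CompactSupport

theorem norm_fderiv_norm_sq_le {E F : Type*} [NormedAddCommGroup E] [NormedSpace ℝ E]
    [NormedAddCommGroup F] [InnerProductSpace ℝ F] {u : E → F} {z : E}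
    (hu : DifferentiableAt ℝ u z) :
    ‖fderiv ℝ (fun y ↦ ‖u y‖ ^ 2) z‖ ≤ 2 * ‖u z‖ * ‖fderiv ℝ u z‖ := by
  rw [hu.hasFDerivAt.norm_sq.fderiv, mul_assoc, ← innerSL_apply_norm ℝ (u z)]
  refine norm_nsmul_le.trans ?_
  push_cast
  gcongr
  exact ContinuousLinearMap.opNorm_comp_le _ _

section Plane

def prodEquivEuclideanFinTwo : (ℝ × ℝ) ≃L[ℝ] EuclideanSpace ℝ (Fin 2) :=
  (ContinuousLinearEquiv.finTwoArrow ℝ ℝ).symm.trans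
    (PiLp.continuousLinearEquiv 2 ℝ fun _ : Fin 2 ↦ ℝ).symm

theorem measurePreserving_prodEquivEuclideanFinTwo :
    MeasurePreserving prodEquivEuclideanFinTwo :=
  (PiLp.volume_preserving_toLp (Fin 2)).comp (volume_preserving_finTwoArrow ℝ).symm

variable {F : Type*} [NormedAddCommGroup F]

theorem lintegral_enorm_sq_le_lintegral_fderiv_basisFun_mul [NormedSpace ℝ F]
    {v : EuclideanSpace ℝ (Fin 2) → F} (hv : ContDiff ℝ 1 v) (hsupp : HasCompactSupport v) :
    ∫⁻ x, ‖v x‖ₑ ^ 2 ≤ (∫⁻ x, ‖fderiv ℝ v x (EuclideanSpace.basisFun (Fin 2) ℝ 0)‖ₑ) *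
      ∫⁻ x, ‖fderiv ℝ v x (EuclideanSpace.basisFun (Fin 2) ℝ 1)‖ₑ := by
  set φ := prodEquivEuclideanFinTwo
  have hφ (g : EuclideanSpace ℝ (Fin 2) → ℝ≥0∞) : ∫⁻ p, g (φ p) = ∫⁻ x, g x :=
    measurePreserving_prodEquivEuclideanFinTwo.lintegral_comp_emb
      φ.toHomeomorph.measurableEmbedding g
  have hD (p w : ℝ × ℝ) : fderiv ℝ (v ∘ φ) p w = fderiv ℝ v (φ p) (φ w) := by
    rw [φ.comp_right_fderiv]; rfl
  have h10 : φ (1, 0) = EuclideanSpace.basisFun (Fin 2) ℝ 0 := by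
    ext i; fin_cases i <;> simp [φ, prodEquivEuclideanFinTwo]
  have h01 : φ (0, 1) = EuclideanSpace.basisFun (Fin 2) ℝ 1 := by
    ext i; fin_cases i <;> simp [φ, prodEquivEuclideanFinTwo]
  have h := lintegral_enorm_sq_le_lintegral_fderiv_mul (hv.comp φ.contDiff)
    (hsupp.comp_homeomorph φ.toHomeomorph)
  simp only [hD, h10, h01, Function.comp_apply] at h
  rwa [hφ (fun x ↦ ‖v x‖ₑ ^ 2), hφ (fun x ↦ ‖fderiv ℝ v x _‖ₑ),
    hφ (fun x ↦ ‖fderiv ℝ v x _‖ₑ)] at h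

theorem two_mul_lintegral_enorm_sq_le_sq_lintegral_fderiv
    {v : EuclideanSpace ℝ (Fin 2) → ℝ} (hv : ContDiff ℝ 1 v) (hsupp : HasCompactSupport v) :
    2 * ∫⁻ x, ‖v x‖ₑ ^ 2 ≤ (∫⁻ x, ‖fderiv ℝ v x‖ₑ) ^ 2 := by
  set b := EuclideanSpace.basisFun (Fin 2) ℝ
  have hDv : Continuous (fderiv ℝ v) := hv.continuous_fderiv one_ne_zero
  have hParseval (L : StrongDual ℝ (EuclideanSpace ℝ (Fin 2))) :
      ‖L (b 0)‖ₑ ^ 2 + ‖L (b 1)‖ₑ ^ 2 ≤ ‖L‖ₑ ^ 2 := by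
    have h := b.norm_dual L
    rw [Fin.sum_univ_two, ← sq_abs (L (b 0)), ← sq_abs (L (b 1)), ← Real.norm_eq_abs,
      ← Real.norm_eq_abs] at h
    simp only [enorm_eq_nnnorm, ← ENNReal.coe_pow, ← ENNReal.coe_add, ENNReal.coe_le_coe,
      ← NNReal.coe_le_coe]
    push_cast
    rw [h]
  calc 2 * ∫⁻ x, ‖v x‖ₑ ^ 2
      ≤ 2 * ((∫⁻ x, ‖fderiv ℝ v x (b 0)‖ₑ) * ∫⁻ x, ‖fderiv ℝ v x (b 1)‖ₑ) := by
        gcongr; exact lintegral_enorm_sq_le_lintegral_fderiv_basisFun_mul hv hsupp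
    _ ≤ (∫⁻ x, ‖fderiv ℝ v x‖ₑ) ^ 2 :=
        two_mul_lintegral_mul_le_sq_lintegral
          (hDv.clm_apply continuous_const).enorm.aemeasurable
          (hDv.clm_apply continuous_const).enorm.aemeasurable hDv.enorm.aemeasurable
          fun x ↦ hParseval _

theorem eLpNorm_four_pow_le [InnerProductSpace ℝ F] {u : EuclideanSpace ℝ (Fin 2) → F}
    (hu : ContDiff ℝ 1 u) (hsupp : HasCompactSupport u) :
    eLpNorm u 4 volume ^ 4 ≤
      2 * eLpNorm u 2 volume ^ 2 * eLpNorm (fun x ↦ ‖fderiv ℝ u x‖) 2 volume ^ 2 := by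
  set w := fun x ↦ ‖u x‖ ^ 2
  set Y := eLpNorm u 2 volume
  set Z := eLpNorm (fun x ↦ ‖fderiv ℝ u x‖) 2 volume
  have hDu : Continuous (fderiv ℝ u) := hu.continuous_fderiv one_ne_zero
  have hw : HasCompactSupport w := hsupp.comp_left (g := fun y : F ↦ ‖y‖ ^ 2) (by simp)
  have hHolder : ∫⁻ x, ‖fderiv ℝ w x‖ₑ ≤ 2 * Y * Z := by
    rw [← eLpNorm_one_eq_lintegral_enorm]
    calc eLpNorm (fderiv ℝ w) 1 volume
        ≤ eLpNorm (fun x ↦ 2 * ‖u x‖ * ‖‖fderiv ℝ u x‖‖) 1 volume :=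
          eLpNorm_mono_real fun x ↦ (norm_fderiv_norm_sq_le (hu.differentiable one_ne_zero x)).trans
            (by simp)
      _ ≤ 2 * Y * Z := eLpNorm_le_eLpNorm_mul_eLpNorm'_of_norm hu.continuous.aestronglyMeasurable
          hDu.norm.aestronglyMeasurable (fun a b ↦ 2 * ‖a‖ * ‖b‖) 2 (by simp)
  refine (ENNReal.mul_le_mul_iff_right two_ne_zero ENNReal.ofNat_ne_top).1 ?_
  calc 2 * eLpNorm u 4 volume ^ 4 = 2 * ∫⁻ x, ‖w x‖ₑ ^ 2 := by
        have h4 : eLpNorm u 4 volume ^ 4 = ∫⁻ x, ‖u x‖ₑ ^ 4 := by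
          exact_mod_cast eLpNorm_nat_pow_eq_lintegral four_ne_zero
        simp [h4, w, enorm_pow, ← pow_mul]
    _ ≤ (∫⁻ x, ‖fderiv ℝ w x‖ₑ) ^ 2 :=
        two_mul_lintegral_enorm_sq_le_sq_lintegral_fderiv (hu.norm_sq ℝ) hw
    _ ≤ (2 * Y * Z) ^ 2 := by gcongr
    _ = 2 * (2 * Y ^ 2 * Z ^ 2) := by ring

end Plane

theorem Real.le_rpow_mul_rpow_mul_rpow_of_pow_four_le {a b c k : ℝ} (hb : 0 ≤ b) (hc : 0 ≤ c)
    (hk : 0 ≤ k) (h : a ^ 4 ≤ k * b ^ 2 * c ^ 2) :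
    a ≤ k ^ (1 / 4 : ℝ) * b ^ (1 / 2 : ℝ) * c ^ (1 / 2 : ℝ) := by
  refine le_of_pow_le_pow_left₀ four_ne_zero (by positivity) (h.trans_eq ?_)
  simp only [mul_pow, ← Real.rpow_natCast, ← Real.rpow_mul hk, ← Real.rpow_mul hb,
    ← Real.rpow_mul hc]
  norm_num

/-- Ladyzhenskaya inequality in 2d: for a compactly supported C¹ vector field
`u : ℝ² → ℝ²`, `‖u‖_{L⁴} ≤ 2^{1/4} ‖u‖_{L²}^{1/2} ‖∇u‖_{L²}^{1/2}`. -/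
theorem ladyzhenskaya_2d
    (u : EuclideanSpace ℝ (Fin 2) → EuclideanSpace ℝ (Fin 2))
    (hu : ContDiff ℝ 1 u) (hsupp : HasCompactSupport u) :
    (eLpNorm u 4 volume).toReal ≤
      (2 : ℝ) ^ ((1 : ℝ) / 4) *
        (eLpNorm u 2 volume).toReal ^ ((1 : ℝ) / 2) *
        (eLpNorm (fun x => ‖fderiv ℝ u x‖) 2 volume).toReal ^ ((1 : ℝ) / 2) := by
  have hY : eLpNorm u 2 volume ≠ ⊤ :=
    (hu.continuous.memLp_of_hasCompactSupport hsupp).eLpNorm_ne_top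
  have hZ : eLpNorm (fun x => ‖fderiv ℝ u x‖) 2 volume ≠ ⊤ :=
    ((hu.continuous_fderiv one_ne_zero).norm.memLp_of_hasCompactSupport
      (hsupp.fderiv ℝ).norm).eLpNorm_ne_top
  have h := ENNReal.toReal_mono (by finiteness) (eLpNorm_four_pow_le hu hsupp)
  simp only [ENNReal.toReal_mul, ENNReal.toReal_pow, ENNReal.toReal_ofNat] at h
  exact Real.le_rpow_mul_rpow_mul_rpow_of_pow_four_le ENNReal.toReal_nonneg
    ENNReal.toReal_nonneg zero_le_two h
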